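/- Let x be an element of c₀ (the continuous functions ℕ → ℂ vanishing at infinity, with the supremum norm) with ‖x‖ ≤ 1, let n ∈ ℕ satisfy ‖x n‖ < √2 − 1, and let e ∈ c₀ be the indicator function of {n}. Then for every k ∈ {0, 1, 2, 3}, ‖x + (Complex.I)^k • e‖ < √2 = √(1 + ‖e‖). (Hence no contraction in c₀ can satisfy the paper's unitarity criterion max_k ‖x + iᵏ e‖ ≥ √(1 + ‖e‖).) -/
import Mathlib


open ZeroAtInfty

lemma c0_norm_le (f : C₀(ℕ, ℂ)) (C : ℝ) (hC : 0 ≤ C) (h : ∀ m, ‖f m‖ ≤ C) : ‖f‖ ≤ C := by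
  rw [← ZeroAtInftyContinuousMap.norm_toBCF_eq_norm]
  exact (BoundedContinuousFunction.norm_le hC).mpr h

/-- Example after Theorem 3.2: if `x ∈ c₀` is a contraction, `n` satisfies `‖x n‖ < √2 - 1`,
and `e ∈ c₀` is the indicator function of `{n}`, then `‖x + iᵏ • e‖ < √2 = √(1 + ‖e‖)` for
`k = 0, 1, 2, 3`; so no contraction in `c₀` satisfies the unitarity criterion. -/
theorem c0_not_unital (x : C₀(ℕ, ℂ)) (hx : ‖x‖ ≤ 1) (n : ℕ)
    (hxn : ‖x n‖ < Real.sqrt 2 - 1) (e : C₀(ℕ, ℂ))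
    (he : ∀ m : ℕ, e m = if m = n then 1 else 0) :
    (∀ k : Fin 4, ‖x + (Complex.I : ℂ) ^ (k : ℕ) • e‖ < Real.sqrt 2) ∧
      Real.sqrt 2 = Real.sqrt (1 + ‖e‖) := by
  have h1 : (1 : ℝ) ≤ ‖x n‖ + 1 := le_add_of_nonneg_left (norm_nonneg _)
  have hs : ‖x n‖ + 1 < Real.sqrt 2 := by linarith
  have hIk : ∀ k : ℕ, ‖(Complex.I : ℂ) ^ k‖ = 1 := fun k => by
    rw [norm_pow, Complex.norm_I, one_pow]
  constructor
  · intro k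
    refine lt_of_le_of_lt (c0_norm_le _ (‖x n‖ + 1) (by positivity) fun m => ?_) hs
    have : (x + (Complex.I : ℂ) ^ (k : ℕ) • e) m = x m + (Complex.I : ℂ) ^ (k : ℕ) * e m := rfl
    rw [this, he m]
    by_cases hm : m = n
    · subst hm
      rw [if_pos rfl, mul_one]
      calc ‖x m + (Complex.I : ℂ) ^ (k : ℕ)‖ ≤ ‖x m‖ + ‖(Complex.I : ℂ) ^ (k : ℕ)‖ :=
            norm_add_le _ _
        _ = ‖x m‖ + 1 := by rw [hIk]
    · simp only [if_neg hm, mul_zero, add_zero]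
      calc ‖x m‖ ≤ ‖x‖ := by
            rw [← ZeroAtInftyContinuousMap.norm_toBCF_eq_norm]
            exact BoundedContinuousFunction.norm_coe_le_norm (f := x.toBCF) m
        _ ≤ 1 := hx
        _ ≤ ‖x n‖ + 1 := h1
  · have hen : ‖e‖ = 1 := by
      refine le_antisymm (c0_norm_le _ 1 zero_le_one fun m => ?_) ?_
      · rw [he m]; split <;> simp
      · have : ‖e n‖ ≤ ‖e‖ := by
          rw [← ZeroAtInftyContinuousMap.norm_toBCF_eq_norm]
          exact BoundedContinuousFunction.norm_coe_le_norm (f := e.toBCF) n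
        rwa [he n, if_pos rfl, norm_one] at this
    rw [hen]; norm_num
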